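/- Let $X_1,\dots,X_m$ be independent real random variables with $\mathbf{E}[X_i]=0$ and $\mathbf{E}[|X_i|^p]<\infty$ for some $p\in(1,2]$. Then $\mathbf{E}[|\sum_{i=1}^m X_i|^p]\le 2\sum_{i=1}^m\mathbf{E}[|X_i|^p]$. -/

import Mathlib

/-!
Everything rests on the pointwise inequality
`|x + y| ^ p ≤ |x| ^ p + p x |x| ^ (p - 2) y + 2 |y| ^ p`, whose middle term is the linear
approximation of `|·| ^ p` at `x`. By homogeneity it reduces to `x = 1`, where it follows from
the subadditivity of `s ↦ s ^ (p - 1)` (this is where `p ≤ 2` enters) and Bernoulli's inequality.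
For `f` independent of a centred `g`, the middle term integrates to `E[f |f| ^ (p - 2)] E[g] = 0`,
so `E|f + g| ^ p ≤ E|f| ^ p + 2 E|g| ^ p`; adding the variables one at a time gives the theorem.
-/

open MeasureTheory ProbabilityTheory Real Set

lemma le_of_hasDerivAt_le_of_le {f g f' g' : ℝ → ℝ} {a b : ℝ}
    (hf : ∀ x, HasDerivAt f (f' x) x) (hg : ∀ x, HasDerivAt g (g' x) x)
    (ha : f a ≤ g a) (hderiv : ∀ x ∈ Ico a b, f' x ≤ g' x) :
    ∀ x ∈ Icc a b, f x ≤ g x :=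
  image_le_of_deriv_right_le_deriv_boundary
    (fun x _ ↦ (hf x).continuousAt.continuousWithinAt) (fun x _ ↦ (hf x).hasDerivWithinAt) ha
    (fun x _ ↦ (hg x).continuousAt.continuousWithinAt) (fun x _ ↦ (hg x).hasDerivWithinAt) hderiv

lemma one_add_rpow_le {p t : ℝ} (hp : 1 ≤ p) (hp2 : p ≤ 2) (ht : 0 ≤ t) :
    (1 + t) ^ p ≤ 1 + p * t + t ^ p := by
  refine le_of_hasDerivAt_le_of_le (a := 0) (b := t)
    (fun s ↦ ((hasDerivAt_id s).const_add 1).rpow_const (Or.inr hp))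
    (fun s ↦ (((hasDerivAt_id s).const_mul p).const_add 1).add
      (hasDerivAt_rpow_const (Or.inr hp)))
    (by simp [zero_rpow (by linarith : p ≠ 0)]) (fun s hs ↦ ?_) t ⟨ht, le_rfl⟩
  have hsub : (1 + s) ^ (p - 1) ≤ 1 + s ^ (p - 1) := by
    simpa using rpow_add_le_add_rpow zero_le_one hs.1 (by linarith) (by linarith)
  simp only [id, mul_one]
  nlinarith

lemma one_sub_rpow_le {p s : ℝ} (hp : 1 ≤ p) (hp2 : p ≤ 2) (hs0 : 0 ≤ s) (hs1 : s ≤ 1) :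
    (1 - s) ^ p ≤ 1 - p * s + s ^ p := by
  refine le_of_hasDerivAt_le_of_le (a := 0) (b := s)
    (fun u ↦ ((hasDerivAt_id u).const_sub 1).rpow_const (Or.inr hp))
    (fun u ↦ (((hasDerivAt_id u).const_mul p).const_sub 1).add
      (hasDerivAt_rpow_const (Or.inr hp)))
    (by simp [zero_rpow (by linarith : p ≠ 0)]) (fun u hu ↦ ?_) s ⟨hs0, le_rfl⟩
  have hsub : 1 ≤ (1 - u) ^ (p - 1) + u ^ (p - 1) := by
    simpa using rpow_add_le_add_rpow (by linarith [hu.2] : 0 ≤ 1 - u) hu.1 (by linarith)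
      (by linarith)
  simp only [id, mul_one]
  nlinarith

lemma abs_one_add_rpow_le {p : ℝ} (hp : 1 ≤ p) (hp2 : p ≤ 2) (t : ℝ) :
    |1 + t| ^ p ≤ 1 + p * t + 2 * |t| ^ p := by
  rcases le_total 0 t with ht | ht
  · rw [abs_of_nonneg ht, abs_of_nonneg (by linarith)]
    linarith [one_add_rpow_le hp hp2 ht, rpow_nonneg ht p]
  rcases le_total (-1) t with ht1 | ht1
  · have h := one_sub_rpow_le hp hp2 (neg_nonneg.2 ht) (by linarith)
    rw [abs_of_nonpos ht, abs_of_nonneg (by linarith)]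
    simp only [sub_neg_eq_add, mul_neg] at h
    linarith [rpow_nonneg (neg_nonneg.2 ht) p]
  · have hbernoulli := one_add_mul_self_le_rpow_one_add (by linarith : -1 ≤ -t - 1) hp
    have hmono : (-t - 1) ^ p ≤ (-t) ^ p :=
      rpow_le_rpow (by linarith) (by linarith) (by linarith)
    rw [abs_of_nonpos ht, abs_of_nonpos (by linarith), show -(1 + t) = -t - 1 by ring]
    simp only [add_sub_cancel] at hbernoulli
    linarith

lemma abs_add_rpow_le {p : ℝ} (hp : 1 ≤ p) (hp2 : p ≤ 2) (x y : ℝ) :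
    |x + y| ^ p ≤ |x| ^ p + p * (x * |x| ^ (p - 2)) * y + 2 * |y| ^ p := by
  rcases eq_or_ne x 0 with rfl | hx
  · simp only [zero_add, abs_zero, zero_rpow (by linarith : p ≠ 0), zero_mul, mul_zero]
    linarith [rpow_nonneg (abs_nonneg y) p]
  have hslope : |x| ^ p * (y / x) = x * |x| ^ (p - 2) * y := by
    rw [show p = 2 + (p - 2) by ring, rpow_add (abs_pos.2 hx), rpow_two, sq_abs]
    field_simp
    ring_nf
  calc |x + y| ^ p = |x| ^ p * |1 + y / x| ^ p := by
        rw [← mul_rpow (abs_nonneg _) (abs_nonneg _), ← abs_mul, mul_add, mul_div_cancel₀ _ hx,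
          mul_one]
    _ ≤ |x| ^ p * (1 + p * (y / x) + 2 * |y / x| ^ p) := by
        gcongr
        exact abs_one_add_rpow_le hp hp2 _
    _ = |x| ^ p + p * (|x| ^ p * (y / x)) + 2 * |x * (y / x)| ^ p := by
        rw [abs_mul, mul_rpow (abs_nonneg _) (abs_nonneg _)]
        ring
    _ = |x| ^ p + p * (x * |x| ^ (p - 2)) * y + 2 * |y| ^ p := by
        rw [hslope, mul_div_cancel₀ _ hx]
        ring

lemma abs_mul_abs_rpow_sub_two {p : ℝ} (hp : 1 < p) (x : ℝ) :
    |x * |x| ^ (p - 2)| = |x| ^ (p - 1) := by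
  rcases eq_or_ne x 0 with rfl | hx
  · simp [zero_rpow (by linarith : p - 1 ≠ 0)]
  rw [abs_mul, abs_of_nonneg (rpow_nonneg (abs_nonneg x) _),
    ← rpow_one_add' (abs_nonneg x) (by linarith)]
  ring_nf

section

variable {Ω : Type*} [MeasurableSpace Ω] {μ : Measure Ω} {p : ℝ}

lemma memLp_ofReal_iff_integrable_abs_rpow {f : Ω → ℝ} (hf : AEStronglyMeasurable f μ)
    (hp : 0 < p) : MemLp f (ENNReal.ofReal p) μ ↔ Integrable (fun ω ↦ |f ω| ^ p) μ := by
  rw [← integrable_norm_rpow_iff hf (by simpa using hp) ENNReal.ofReal_ne_top,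
    ENNReal.toReal_ofReal hp.le]
  rfl

lemma integral_abs_add_rpow_le [IsFiniteMeasure μ] (hp : 1 < p) (hp2 : p ≤ 2) {f g : Ω → ℝ}
    (hf : MemLp f (ENNReal.ofReal p) μ) (hg : MemLp g (ENNReal.ofReal p) μ)
    (hfg : IndepFun f g μ) (hg0 : ∫ ω, g ω ∂μ = 0) :
    ∫ ω, |f ω + g ω| ^ p ∂μ ≤ ∫ ω, |f ω| ^ p ∂μ + 2 * ∫ ω, |g ω| ^ p ∂μ := by
  have hp0 : 0 < p := by linarith
  have hfp := (memLp_ofReal_iff_integrable_abs_rpow hf.1 hp0).1 hf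
  have hgp := (memLp_ofReal_iff_integrable_abs_rpow hg.1 hp0).1 hg
  have hfgp := (memLp_ofReal_iff_integrable_abs_rpow (hf.add hg).1 hp0).1 (hf.add hg)
  set φ : ℝ → ℝ := fun x ↦ x * |x| ^ (p - 2)
  have hφ : Measurable φ := by fun_prop
  have hφf : Integrable (φ ∘ f) μ := by
    have h : Integrable (fun ω ↦ |f ω| ^ (p - 1)) μ :=
      integrable_norm_rpow_of_le hf.1 (by linarith) hp0.le (by linarith) hfp
    exact h.mono' (hφ.comp_aemeasurable hf.1.aemeasurable).aestronglyMeasurable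
      (ae_of_all _ fun ω ↦ (abs_mul_abs_rpow_sub_two hp (f ω)).le)
  have hφfg : Integrable (fun ω ↦ φ (f ω) * g ω) μ :=
    (hfg.comp hφ measurable_id).integrable_mul hφf (hg.integrable (by simpa using hp.le))
  have hcross : ∫ ω, φ (f ω) * g ω ∂μ = 0 := by
    simpa [hg0] using
      (hfg.comp hφ measurable_id).integral_fun_mul_eq_mul_integral hφf.1 hg.1
  have hA : Integrable (fun ω ↦ |f ω| ^ p + p * (φ (f ω) * g ω)) μ :=
    hfp.add (hφfg.const_mul p)
  calc ∫ ω, |f ω + g ω| ^ p ∂μ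
      ≤ ∫ ω, (|f ω| ^ p + p * (φ (f ω) * g ω) + 2 * |g ω| ^ p) ∂μ :=
        integral_mono hfgp (hA.add (hgp.const_mul 2))
          fun ω ↦ (abs_add_rpow_le hp.le hp2 (f ω) (g ω)).trans_eq (by ring)
    _ = ∫ ω, |f ω| ^ p ∂μ + 2 * ∫ ω, |g ω| ^ p ∂μ := by
        rw [integral_add hA (hgp.const_mul 2), integral_add hfp (hφfg.const_mul p),
          integral_const_mul, integral_const_mul, hcross]
        ring

lemma integral_abs_sum_rpow_le [IsFiniteMeasure μ] {ι : Type*} (hp : 1 < p) (hp2 : p ≤ 2)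
    {X : ι → Ω → ℝ} (hX : ∀ i, MemLp (X i) (ENNReal.ofReal p) μ) (hindep : iIndepFun X μ)
    (hmean : ∀ i, ∫ ω, X i ω ∂μ = 0) (s : Finset ι) :
    ∫ ω, |∑ i ∈ s, X i ω| ^ p ∂μ ≤ 2 * ∑ i ∈ s, ∫ ω, |X i ω| ^ p ∂μ := by
  induction s using Finset.cons_induction with
  | empty => simp [zero_rpow (by linarith : p ≠ 0)]
  | cons i s hi ih =>
    have hstep := integral_abs_add_rpow_le hp hp2 (memLp_finsetSum' s fun j _ ↦ hX j) (hX i)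
      (hindep.indepFun_finsetSum_of_notMem₀ (fun j ↦ (hX j).1.aemeasurable) hi) (hmean i)
    simp only [Finset.sum_apply] at hstep
    simp only [Finset.sum_cons, add_comm (X i _), mul_add]
    linarith

end

theorem von_bahr_esseen_general {Ω : Type*} [MeasurableSpace Ω] (P : Measure Ω)
    [IsProbabilityMeasure P] (m : ℕ) (X : Fin m → Ω → ℝ) (p : ℝ)
    (hp : 1 < p) (hp2 : p ≤ 2)
    (hindep : iIndepFun X P)
    (hint : ∀ i, Integrable (X i) P)
    (hmean : ∀ i, ∫ ω, X i ω ∂P = 0)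
    (hmom : ∀ i, Integrable (fun ω => |X i ω| ^ p) P) :
    ∫ ω, |∑ i, X i ω| ^ p ∂P ≤ 2 * ∑ i, ∫ ω, |X i ω| ^ p ∂P :=
  integral_abs_sum_rpow_le hp hp2
    (fun i ↦ (memLp_ofReal_iff_integrable_abs_rpow (hint i).1 (by linarith)).2 (hmom i))
    hindep hmean Finset.univ

/-- von Bahr–Esseen / Petrov inequality: for independent centered real random
variables `X₁, …, X_m` with finite `p`-th moments, `1 < p ≤ 2`,
`E[|∑ X_i|^p] ≤ 2 ∑ E[|X_i|^p]`. -/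
theorem von_bahr_esseen {Ω : Type*} [MeasurableSpace Ω] (P : Measure Ω)
    [IsProbabilityMeasure P] (m : ℕ) (X : Fin m → Ω → ℝ) (p : ℝ)
    (hp : 1 < p) (hp2 : p ≤ 2)
    (hmeas : ∀ i, Measurable (X i))
    (hindep : iIndepFun X P)
    (hint : ∀ i, Integrable (X i) P)
    (hmean : ∀ i, ∫ ω, X i ω ∂P = 0)
    (hmom : ∀ i, Integrable (fun ω => |X i ω| ^ p) P) :
    ∫ ω, |∑ i, X i ω| ^ p ∂P ≤ 2 * ∑ i, ∫ ω, |X i ω| ^ p ∂P :=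
  von_bahr_esseen_general P m X p hp hp2 hindep hint hmean hmom
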